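/- arXiv:2106.13949 — 7 statements merged into one kernel-verified Lean document; each statement's English description precedes it below -/
import Mathlib

section
/- Let A be a bounded linear operator on a complex Hilbert space H. Then w(A) ≥ (1/2)‖A‖ + (1/(2√2)) | ‖Re(A) + Im(A)‖ − ‖Re(A) − Im(A)‖ |, where w denotes the numerical radius, ‖·‖ the operator norm, Re(A) = (A + A*)/2 and Im(A) = (A − A*)/(2i). -/
open ContinuousLinearMap Complex

variable {H : Type*} [NormedAddCommGroup H] [InnerProductSpace ℂ H] [CompleteSpace H]

noncomputable def nrad (A : H →L[ℂ] H) : ℝ :=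
  ⨆ x : {x : H // ‖x‖ = 1}, ‖(inner ℂ (A x) (x : H) : ℂ)‖

noncomputable def reP (A : H →L[ℂ] H) : H →L[ℂ] H := (2 : ℂ)⁻¹ • (A + adjoint A)
noncomputable def imP (A : H →L[ℂ] H) : H →L[ℂ] H := (2 * Complex.I)⁻¹ • (A - adjoint A)

noncomputable def oabs (A : H →L[ℂ] H) : H →L[ℂ] H := cfc Real.sqrt (adjoint A * A)

noncomputable def opow (T : H →L[ℂ] H) (r : ℝ) : H →L[ℂ] H := cfc (fun t : ℝ => t ^ r) T

/-! Put `B = Re A + Im A` and `C = Re A - Im A`. Then `B = Re ((1 - i) A)` and `C = Re ((1 + i) A)`;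
a real part is self-adjoint, so its norm is the supremum of its Rayleigh quotients, which are bounded
by the numerical radius. Hence `‖B‖, ‖C‖ ≤ √2 w(A)`. Conversely `A = (1 + i)/2 • B + (1 - i)/2 • C`
gives `√2 ‖A‖ ≤ ‖B‖ + ‖C‖`, so the left side of the inequality is at most
`(‖B‖ + ‖C‖ + |‖B‖ - ‖C‖|) / (2√2) = max ‖B‖ ‖C‖ / √2 ≤ w(A)`. -/

lemma Complex.norm_one_add_I : ‖1 + I‖ = √2 := by
  simpa [one_add_one_eq_two] using norm_add_mul_I 1 1

lemma Complex.norm_one_sub_I : ‖1 - I‖ = √2 := by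
  simpa [sub_eq_add_neg, one_add_one_eq_two] using norm_add_mul_I 1 (-1)

lemma half_mul_add_abs_sub_le {s a b n w : ℝ} (hs : 0 < s) (ha : a ≤ s * w) (hb : b ≤ s * w)
    (hn : s * n ≤ a + b) : 1 / 2 * n + 1 / (2 * s) * |a - b| ≤ w := by
  rcases abs_cases (a - b) with ⟨h, _⟩ | ⟨h, _⟩ <;> rw [h] <;> field_simp <;> nlinarith

section NumericalRadius

variable {E : Type*} [NormedAddCommGroup E] [InnerProductSpace ℂ E]

lemma nrad_nonneg (A : E →L[ℂ] E) : 0 ≤ nrad A :=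
  Real.iSup_nonneg fun _ => norm_nonneg _

lemma bddAbove_range_norm_inner_apply_self (A : E →L[ℂ] E) :
    BddAbove (Set.range fun x : {x : E // ‖x‖ = 1} => ‖inner ℂ (A x) (x : E)‖) := by
  refine ⟨‖A‖, ?_⟩
  rintro _ ⟨⟨x, hx⟩, rfl⟩
  calc ‖inner ℂ (A x) x‖ ≤ ‖A x‖ * ‖x‖ := norm_inner_le_norm _ _
    _ ≤ ‖A‖ * ‖x‖ * ‖x‖ := by gcongr; exact A.le_opNorm x
    _ = ‖A‖ := by rw [hx, mul_one, mul_one]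

lemma norm_inner_apply_self_le_nrad_mul_sq (A : E →L[ℂ] E) (x : E) :
    ‖inner ℂ (A x) x‖ ≤ nrad A * ‖x‖ ^ 2 := by
  rcases eq_or_ne x 0 with rfl | hx
  · simp
  have hx' : ‖x‖ ≠ 0 := norm_ne_zero_iff.mpr hx
  set u : E := ((‖x‖⁻¹ : ℝ) : ℂ) • x
  have hu : ‖u‖ = 1 := by simp [u, norm_smul, hx']
  have hAu : ‖inner ℂ (A u) u‖ = ‖inner ℂ (A x) x‖ / ‖x‖ ^ 2 := by
    simp only [u, map_smul, inner_smul_left, inner_smul_right, norm_mul, RCLike.norm_conj,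
      norm_real, norm_inv, norm_norm]
    field_simp
  have hle : ‖inner ℂ (A u) u‖ ≤ nrad A :=
    le_ciSup (bddAbove_range_norm_inner_apply_self A) ⟨u, hu⟩
  rwa [hAu, div_le_iff₀ (by positivity)] at hle

lemma nrad_smul (c : ℂ) (A : E →L[ℂ] E) : nrad (c • A) = ‖c‖ * nrad A := by
  simp only [nrad, smul_apply, inner_smul_left, norm_mul, RCLike.norm_conj,
    Real.mul_iSup_of_nonneg (norm_nonneg c)]

end NumericalRadius

lemma isSelfAdjoint_reP (A : H →L[ℂ] H) : IsSelfAdjoint (reP A) := by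
  refine IsSelfAdjoint.smul (R := ℂ) (by simp [IsSelfAdjoint]) ?_
  rw [← star_eq_adjoint]
  exact IsSelfAdjoint.add_star_self A

lemma rayleighQuotient_reP (A : H →L[ℂ] H) (x : H) :
    (reP A).rayleighQuotient x = A.rayleighQuotient x := by
  simp only [rayleighQuotient, reApplyInnerSelf_apply, reP, smul_apply, add_apply,
    inner_smul_left, inner_add_left, adjoint_inner_left]
  rw [← inner_conj_symm x (A x), RCLike.add_conj]
  simp

lemma norm_reP_le_nrad (A : H →L[ℂ] H) : ‖reP A‖ ≤ nrad A := by
  rw [norm_eq_iSup_rayleighQuotient _ (isSelfAdjoint_reP A).isSymmetric]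
  refine ciSup_le fun x => ?_
  rw [rayleighQuotient_reP, rayleighQuotient, reApplyInnerSelf_apply, abs_div, abs_sq]
  refine div_le_of_le_mul₀ (by positivity) (nrad_nonneg A) ?_
  exact (RCLike.abs_re_le_norm _).trans (norm_inner_apply_self_le_nrad_mul_sq A x)

lemma reP_add_imP (A : H →L[ℂ] H) : reP A + imP A = reP ((1 - I) • A) := by
  simp only [reP, imP, map_smulₛₗ adjoint, map_sub, map_one, conj_I, mul_inv, inv_I]
  module

lemma reP_sub_imP (A : H →L[ℂ] H) : reP A - imP A = reP ((1 + I) • A) := by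
  simp only [reP, imP, map_smulₛₗ adjoint, map_add, map_one, conj_I, mul_inv, inv_I]
  module

lemma eq_smul_reP_add_imP_add_smul_reP_sub_imP (A : H →L[ℂ] H) :
    A = ((1 + I) / 2) • (reP A + imP A) + ((1 - I) / 2) • (reP A - imP A) := by
  rw [reP, imP]
  match_scalars <;> field_simp <;> ring

lemma sqrt_two_mul_norm_le (A : H →L[ℂ] H) :
    √2 * ‖A‖ ≤ ‖reP A + imP A‖ + ‖reP A - imP A‖ := by
  calc √2 * ‖A‖
      = √2 * ‖((1 + I) / 2) • (reP A + imP A) + ((1 - I) / 2) • (reP A - imP A)‖ := by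
        rw [← eq_smul_reP_add_imP_add_smul_reP_sub_imP]
    _ ≤ √2 * (‖(1 + I) / 2‖ * ‖reP A + imP A‖ + ‖(1 - I) / 2‖ * ‖reP A - imP A‖) := by
        gcongr
        exact norm_add_le_of_le (norm_smul_le _ _) (norm_smul_le _ _)
    _ = ‖reP A + imP A‖ + ‖reP A - imP A‖ := by
        rw [norm_div, norm_div, norm_one_add_I, norm_one_sub_I, Complex.norm_two]
        field_simp
        rw [Real.sq_sqrt zero_le_two]

theorem stmt0 (A : H →L[ℂ] H) :
    nrad A ≥ (1/2) * ‖A‖ + (1/(2 * Real.sqrt 2)) * |‖reP A + imP A‖ - ‖reP A - imP A‖| := by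
  have hplus : ‖reP A + imP A‖ ≤ √2 * nrad A := by
    rw [reP_add_imP, ← norm_one_sub_I, ← nrad_smul]
    exact norm_reP_le_nrad _
  have hminus : ‖reP A - imP A‖ ≤ √2 * nrad A := by
    rw [reP_sub_imP, ← norm_one_add_I, ← nrad_smul]
    exact norm_reP_le_nrad _
  exact half_mul_add_abs_sub_le (by positivity) hplus hminus (sqrt_two_mul_norm_le A)
end

section
/- Let A be a bounded linear operator on a complex Hilbert space H. Then w(A) ≥ (1/√2) · max{ ‖Re(A) + Im(A)‖ , ‖Re(A) − Im(A)‖ }. -/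
/-!
`Re A` is self-adjoint, so its norm is the supremum of `|⟨Re A x, x⟩| = |Re ⟨A x, x⟩| ≤ |⟨A x, x⟩|`
over unit vectors `x`; hence `‖Re A‖ ≤ w(A)`. Applied to `(1 ∓ i) A`, whose real part is
`Re A ± Im A` and whose numerical radius is `√2 w(A)`, this gives the bound.
-/

open ContinuousLinearMap Complex

variable {H : Type*} [NormedAddCommGroup H] [InnerProductSpace ℂ H] [CompleteSpace H]

namespace ContinuousLinearMap

section NumericalRadius

omit [CompleteSpace H]

lemma bddAbove_norm_inner_apply_self_sphere (A : H →L[ℂ] H) :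
    BddAbove (Set.range fun x : {x : H // ‖x‖ = 1} => ‖(inner ℂ (A x) (x : H) : ℂ)‖) := by
  refine ⟨‖A‖, ?_⟩
  rintro r ⟨⟨x, hx⟩, rfl⟩
  calc ‖(inner ℂ (A x) x : ℂ)‖ ≤ ‖A x‖ * ‖x‖ := norm_inner_le_norm _ _
    _ ≤ ‖A‖ * ‖x‖ * ‖x‖ := by gcongr; exact A.le_opNorm x
    _ = ‖A‖ := by rw [hx, mul_one, mul_one]

lemma nrad_nonneg (A : H →L[ℂ] H) : 0 ≤ nrad A :=
  Real.iSup_nonneg fun _ => norm_nonneg _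

lemma norm_inner_apply_self_le_nrad (A : H →L[ℂ] H) {x : H} (hx : ‖x‖ = 1) :
    ‖(inner ℂ (A x) x : ℂ)‖ ≤ nrad A :=
  le_ciSup (bddAbove_norm_inner_apply_self_sphere A) ⟨x, hx⟩

lemma nrad_smul (c : ℂ) (A : H →L[ℂ] H) : nrad (c • A) = ‖c‖ * nrad A := by
  simp only [nrad, smul_apply, inner_smul_left, norm_mul, RCLike.norm_conj]
  exact (Real.mul_iSup_of_nonneg (norm_nonneg c) _).symm

lemma abs_rayleighQuotient_le_nrad (A : H →L[ℂ] H) (x : H) :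
    |A.rayleighQuotient x| ≤ nrad A := by
  rcases eq_or_ne x 0 with rfl | hx
  · simpa using nrad_nonneg A
  have hc : ((‖x‖ : ℂ))⁻¹ ≠ 0 := by simpa using hx
  have hu : ‖((‖x‖ : ℂ))⁻¹ • x‖ = 1 := by simp [norm_smul, hx]
  rw [← A.rayleigh_smul x hc, rayleighQuotient, reApplyInnerSelf_apply, hu, one_pow, div_one]
  exact (Complex.abs_re_le_norm _).trans (A.norm_inner_apply_self_le_nrad hu)

end NumericalRadius

lemma isSelfAdjoint_reP (A : H →L[ℂ] H) : IsSelfAdjoint (reP A) := by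
  rw [reP, ← star_eq_adjoint]
  exact .smul (by simp [IsSelfAdjoint]) (IsSelfAdjoint.add_star_self A)

lemma reApplyInnerSelf_reP (A : H →L[ℂ] H) (x : H) :
    (reP A).reApplyInnerSelf x = A.reApplyInnerSelf x := by
  rw [reApplyInnerSelf_apply, reP, smul_apply, add_apply, inner_smul_left, inner_add_left,
    adjoint_inner_left, ← inner_conj_symm x (A x), add_conj]
  simp [reApplyInnerSelf_apply]

lemma reP_smul (c : ℂ) (A : H →L[ℂ] H) :
    reP (c • A) = (c.re : ℂ) • reP A - (c.im : ℂ) • imP A := by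
  ext x
  simp only [reP, imP, map_smulₛₗ, smul_apply, add_apply, sub_apply]
  conv_lhs => rw [← re_add_im c]
  match_scalars <;> simp only [map_add, map_mul, conj_ofReal, conj_I, mul_inv_rev, inv_I] <;> ring

lemma norm_reP_le_nrad (A : H →L[ℂ] H) : ‖reP A‖ ≤ nrad A := by
  rw [norm_eq_iSup_rayleighQuotient _ (isSelfAdjoint_reP A).isSymmetric]
  refine ciSup_le fun x => ?_
  rw [rayleighQuotient, reApplyInnerSelf_reP]
  exact A.abs_rayleighQuotient_le_nrad x

lemma norm_reP_smul_le (c : ℂ) (A : H →L[ℂ] H) : ‖reP (c • A)‖ ≤ ‖c‖ * nrad A :=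
  nrad_smul c A ▸ norm_reP_le_nrad (c • A)

end ContinuousLinearMap

theorem stmt1 (A : H →L[ℂ] H) :
    nrad A ≥ (1 / Real.sqrt 2) * max ‖reP A + imP A‖ ‖reP A - imP A‖ := by
  have hnorm : ‖1 - I‖ = Real.sqrt 2 ∧ ‖1 + I‖ = Real.sqrt 2 := by
    norm_num [norm_def, normSq_apply]
  have hplus : ‖reP A + imP A‖ ≤ Real.sqrt 2 * nrad A := by
    simpa [reP_smul, hnorm] using norm_reP_smul_le (1 - I) A
  have hminus : ‖reP A - imP A‖ ≤ Real.sqrt 2 * nrad A := by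
    simpa [reP_smul, hnorm] using norm_reP_smul_le (1 + I) A
  rw [ge_iff_le, one_div, inv_mul_le_iff₀ (by positivity)]
  exact max_le hplus hminus
end

section
/- Heinz inequality: let A be a bounded linear operator on a complex Hilbert space H, let x, y ∈ H, and let α ∈ [0,1]. Then |⟨Ax, y⟩|² ≤ ⟨|A|^{2α} x, x⟩ · ⟨|A*|^{2(1−α)} y, y⟩, where |A| = (A*A)^{1/2}. -/
/-! With `T = A†A`, `S = AA†` and `γ = 1 - α`: since `A T = S A`, every continuous `f` satisfies
`A f(T) = f(S) A`. For `ε > 0` this gives the factorisation `A = (S + ε)^(γ/2) A (T + ε)^(-γ/2)`,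
and Cauchy–Schwarz yields
`|⟨Ax, y⟩|² ≤ ⟨T (T + ε)^(-γ) x, x⟩ ⟨(S + ε)^γ y, y⟩ ≤ ⟨T^α x, x⟩ ⟨(S + ε)^γ y, y⟩`.
As `ε → 0`, `(S + ε)^γ → S^γ` in norm because `(t + ε)^γ → t^γ` uniformly on the spectrum.
Finally `|A|^(2α) = T^α` and `|A*|^(2γ) = S^γ`. -/

open ContinuousLinearMap Complex

variable {H : Type*} [NormedAddCommGroup H] [InnerProductSpace ℂ H] [CompleteSpace H]

open Filter Topology

open Polynomial in
theorem SemiconjBy.aeval {R B : Type*} [CommSemiring R] [Semiring B] [Algebra R B] {x a b : B}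
    (h : SemiconjBy x a b) (p : R[X]) :
    SemiconjBy x (Polynomial.aeval a p) (Polynomial.aeval b p) := by
  induction p using Polynomial.induction_on' with
  | add p q hp hq => simpa only [map_add] using hp.add_right hq
  | monomial n c =>
    simpa only [aeval_monomial] using
      SemiconjBy.mul_right (Algebra.commute_algebraMap_right c x) (h.pow_right n)

section CStarAlgebra

variable {A : Type*} [CStarAlgebra A]

theorem SemiconjBy.cfc_real {x a b : A} (h : SemiconjBy x a b) (ha : IsSelfAdjoint a)
    (hb : IsSelfAdjoint b) {f : ℝ → ℝ} (hf : Continuous f) : SemiconjBy x (cfc f a) (cfc f b) := by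
  cases subsingleton_or_nontrivial A
  · exact Subsingleton.elim _ _
  set M := max ‖a‖ ‖b‖
  have spectrum_subset {c : A} (hc : ‖c‖ ≤ M) : spectrum ℝ c ⊆ Set.Icc (-M) M := fun t ht =>
    abs_le.mp (by simpa using (spectrum.norm_le_norm_of_mem ht).trans hc)
  -- Approximate `f` uniformly on `[-M, M]` by polynomials, for which the claim is algebraic.
  have approx (δ : ℝ) (hδ : 0 < δ) : ‖x * cfc f a - cfc f b * x‖ ≤ 2 * ‖x‖ * δ := by
    obtain ⟨p, hp⟩ := exists_polynomial_near_of_continuousOn (-M) M f hf.continuousOn δ hδ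
    have near {c : A} (hc : IsSelfAdjoint c) (hcM : ‖c‖ ≤ M) :
        ‖cfc f c - Polynomial.aeval c p‖ ≤ δ := by
      rw [← cfc_polynomial p c, ← cfc_sub f (fun t => p.eval t) c]
      refine norm_cfc_le hδ.le fun t ht => ?_
      rw [Real.norm_eq_abs, abs_sub_comm]
      exact (hp t (spectrum_subset hcM ht)).le
    calc ‖x * cfc f a - cfc f b * x‖
        = ‖x * (cfc f a - Polynomial.aeval a p) - (cfc f b - Polynomial.aeval b p) * x‖ := by
          rw [mul_sub, sub_mul, (h.aeval p).eq]; abel_nf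
      _ ≤ ‖x‖ * δ + δ * ‖x‖ := by
          refine (norm_sub_le _ _).trans (add_le_add ?_ ?_)
          · exact (norm_mul_le _ _).trans (by gcongr; exact near ha (le_max_left _ _))
          · exact (norm_mul_le _ _).trans (by gcongr; exact near hb (le_max_right _ _))
      _ = 2 * ‖x‖ * δ := by ring
  have hlim : Tendsto (fun δ : ℝ => 2 * ‖x‖ * δ) (𝓝[>] 0) (𝓝 0) := by
    simpa using ((continuous_const_mul (2 * ‖x‖)).tendsto 0).mono_left nhdsWithin_le_nhds
  have hzero : ‖x * cfc f a - cfc f b * x‖ ≤ 0 :=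
    ge_of_tendsto hlim (eventually_nhdsWithin_of_forall approx)
  exact sub_eq_zero.mp (norm_le_zero_iff.mp hzero)

theorem tendsto_cfc_of_continuous_uncurry {F : ℝ → ℝ → ℝ} (hF : Continuous (Function.uncurry F))
    (a : A) (s : ℝ) : Tendsto (fun r => cfc (F r) a) (𝓝 s) (𝓝 (cfc (F s) a)) := by
  refine tendsto_cfc_fun ?_ (Eventually.of_forall fun r =>
    (hF.comp (continuous_const.prodMk continuous_id)).continuousOn)
  rw [tendstoUniformlyOn_iff_restrict]
  exact Continuous.tendstoUniformly (fun r (t : spectrum ℝ a) => F r t)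
    (hF.comp (continuous_fst.prodMk (continuous_subtype_val.comp continuous_snd))) s

end CStarAlgebra

theorem ContinuousLinearMap.re_inner_apply_le_of_le {𝕜 E : Type*} [RCLike 𝕜]
    [NormedAddCommGroup E] [InnerProductSpace 𝕜 E] {S T : E →L[𝕜] E} (h : S ≤ T) (x : E) :
    RCLike.re (inner 𝕜 (S x) x) ≤ RCLike.re (inner 𝕜 (T x) x) := by
  have := h.re_inner_nonneg_left x
  rw [sub_apply, inner_sub_left, map_sub] at this
  linarith

theorem Real.mul_rpow_add_neg_le {t ε γ : ℝ} (ht : 0 ≤ t) (hε : 0 < ε) (hγ : 0 ≤ γ) :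
    t * (t + ε) ^ (-γ) ≤ t ^ (1 - γ) := by
  rcases ht.eq_or_lt with rfl | ht
  · simpa using Real.rpow_nonneg le_rfl _
  calc t * (t + ε) ^ (-γ) ≤ t * t ^ (-γ) := mul_le_mul_of_nonneg_left
        (Real.rpow_le_rpow_of_nonpos ht (le_add_of_nonneg_right hε.le) (neg_nonpos.mpr hγ)) ht.le
    _ = t ^ (1 - γ) := by
        rw [sub_eq_add_neg, Real.rpow_add ht, Real.rpow_one]

theorem opow_oabs_eq_cfc_rpow (A : H →L[ℂ] H) {r : ℝ} (hr : 0 ≤ r) :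
    opow (oabs A) (2 * r) = cfc (fun t : ℝ => t ^ r) (adjoint A * A) := by
  have hpos : 0 ≤ adjoint A * A := by
    simpa only [star_eq_adjoint] using star_mul_self_nonneg A
  rw [opow, oabs, ← cfc_comp (fun t : ℝ => t ^ (2 * r)) Real.sqrt (adjoint A * A)]
  refine cfc_congr fun t ht => ?_
  rw [Function.comp_apply, Real.sqrt_eq_rpow, ← Real.rpow_mul (spectrum_nonneg_of_nonneg hpos ht)]
  ring_nf

theorem norm_inner_sq_le_of_mul_eq_one (A : H →L[ℂ] H) (x y : H) {g h : ℝ → ℝ}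
    (hh : Continuous h) (hg : ContinuousOn g (spectrum ℝ (adjoint A * A)))
    (hgh : ∀ t ∈ spectrum ℝ (adjoint A * A), h t * g t = 1) :
    ‖(inner ℂ (A x) y : ℂ)‖ ^ 2
      ≤ (inner ℂ (cfc (fun t => g t * (t * g t)) (adjoint A * A) x) x : ℂ).re
        * (inner ℂ (cfc (fun t => h t * h t) (A * adjoint A) y) y : ℂ).re := by
  set T := adjoint A * A
  set S := A * adjoint A
  have hT : IsSelfAdjoint T := by
    simpa only [star_eq_adjoint] using IsSelfAdjoint.star_mul_self A
  have hS : IsSelfAdjoint S := by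
    simpa only [star_eq_adjoint] using IsSelfAdjoint.mul_star_self A
  have hintertwine : A * cfc h T = cfc h S * A :=
    SemiconjBy.cfc_real (mul_assoc A (adjoint A) A).symm hT hS hh
  have hfactor : cfc h S * (A * cfc g T) = A := by
    rw [← mul_assoc, ← hintertwine, mul_assoc, ← cfc_mul h g T hh.continuousOn hg,
      cfc_congr hgh, cfc_const_one ℝ T, mul_one]
  have hinner : inner ℂ (A x) y = inner ℂ ((A * cfc g T) x) (cfc h S y) := by
    conv_lhs => rw [← hfactor]
    rw [mul_apply_eq_comp, ← adjoint_inner_right, (cfc_predicate h S).adjoint_eq]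
  have hu : ‖(A * cfc g T) x‖ ^ 2 = (inner ℂ (cfc (fun t => g t * (t * g t)) T x) x : ℂ).re := by
    have : adjoint (A * cfc g T) * (A * cfc g T) = cfc (fun t => g t * (t * g t)) T := by
      rw [← star_eq_adjoint, star_mul, (cfc_predicate g T).star_eq, star_eq_adjoint,
        cfc_mul g (fun t => t * g t) T, cfc_mul (fun t => t) g T, cfc_id' ℝ T]
      simp only [T, mul_assoc]
    rw [apply_norm_sq_eq_inner_adjoint_left, ← this]
    rfl
  have hv : ‖cfc h S y‖ ^ 2 = (inner ℂ (cfc (fun t => h t * h t) S y) y : ℂ).re := by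
    rw [apply_norm_sq_eq_inner_adjoint_left, cfc_mul h h S, (cfc_predicate h S).adjoint_eq]
    rfl
  calc ‖(inner ℂ (A x) y : ℂ)‖ ^ 2 ≤ (‖(A * cfc g T) x‖ * ‖cfc h S y‖) ^ 2 := by
        rw [hinner]; gcongr; exact norm_inner_le_norm _ _
    _ = _ := by rw [mul_pow, hu, hv]

theorem norm_inner_sq_le_cfc_rpow_add (A : H →L[ℂ] H) (x y : H) {α ε : ℝ} (hα0 : 0 ≤ α)
    (hα1 : α ≤ 1) (hε : 0 < ε) :
    ‖(inner ℂ (A x) y : ℂ)‖ ^ 2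
      ≤ (inner ℂ (cfc (fun t : ℝ => t ^ α) (adjoint A * A) x) x : ℂ).re
        * (inner ℂ (cfc (fun t : ℝ => (t + ε) ^ (1 - α)) (A * adjoint A) y) y : ℂ).re := by
  have hexp : 0 ≤ (1 - α) / 2 := by linarith
  have hT : 0 ≤ adjoint A * A := by simpa only [star_eq_adjoint] using star_mul_self_nonneg A
  have hS : 0 ≤ A * adjoint A := by simpa only [star_eq_adjoint] using mul_star_self_nonneg A
  have pos_of_mem {B : H →L[ℂ] H} (hB : 0 ≤ B) {t : ℝ} (ht : t ∈ spectrum ℝ B) : 0 < t + ε := by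
    linarith [spectrum_nonneg_of_nonneg hB ht]
  have hg : ContinuousOn (fun t : ℝ => (t + ε) ^ (-((1 - α) / 2))) (spectrum ℝ (adjoint A * A)) :=
    (continuous_id.add continuous_const).continuousOn.rpow_const fun t ht =>
      Or.inl (pos_of_mem hT ht).ne'
  have key := norm_inner_sq_le_of_mul_eq_one A x y
    (g := fun t => (t + ε) ^ (-((1 - α) / 2))) (h := fun t => (t + ε) ^ ((1 - α) / 2))
    ((continuous_id.add continuous_const).rpow_const fun _ => Or.inr hexp) hg
    (fun t ht => by rw [← Real.rpow_add (pos_of_mem hT ht), add_neg_cancel, Real.rpow_zero])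
  refine key.trans (mul_le_mul ?_ (le_of_eq ?_) ?_ ?_)
  · refine re_inner_apply_le_of_le (𝕜 := ℂ) (cfc_mono (fun t ht => ?_)
      (hg.mul (continuousOn_id.mul hg)) (Real.continuous_rpow_const hα0).continuousOn) x
    calc (t + ε) ^ (-((1 - α) / 2)) * (t * (t + ε) ^ (-((1 - α) / 2)))
        = t * (t + ε) ^ (-(1 - α)) := by
          rw [mul_left_comm, ← Real.rpow_add (pos_of_mem hT ht)]; ring_nf
      _ ≤ t ^ (1 - (1 - α)) :=
          Real.mul_rpow_add_neg_le (spectrum_nonneg_of_nonneg hT ht) hε (by linarith)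
      _ = t ^ α := by ring_nf
  · rw [cfc_congr fun t ht => by rw [← Real.rpow_add (pos_of_mem hS ht), add_halves]]
  · exact ((nonneg_iff_isPositive (𝕜 := ℂ) _).mp
      (cfc_nonneg fun t _ => mul_self_nonneg _)).re_inner_nonneg_left y
  · exact ((nonneg_iff_isPositive (𝕜 := ℂ) _).mp (cfc_nonneg fun t ht =>
      Real.rpow_nonneg (spectrum_nonneg_of_nonneg hT ht) α)).re_inner_nonneg_left x

theorem stmt7 (A : H →L[ℂ] H) (x y : H) (α : ℝ) (hα : α ∈ Set.Icc (0:ℝ) 1) :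
    ‖(inner ℂ (A x) y : ℂ)‖ ^ 2
      ≤ (inner ℂ (opow (oabs A) (2 * α) x) x : ℂ).re
        * (inner ℂ (opow (oabs (adjoint A)) (2 * (1 - α)) y) y : ℂ).re := by
  obtain ⟨hα0, hα1⟩ := hα
  rw [opow_oabs_eq_cfc_rpow A hα0, opow_oabs_eq_cfc_rpow _ (sub_nonneg.mpr hα1), adjoint_adjoint]
  have hlim : Tendsto
      (fun ε => (inner ℂ (cfc (fun t : ℝ => (t + ε) ^ (1 - α)) (A * adjoint A) y) y : ℂ).re)
      (𝓝[>] 0) (𝓝 (inner ℂ (cfc (fun t : ℝ => t ^ (1 - α)) (A * adjoint A) y) y : ℂ).re) := by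
    have hcfc := tendsto_cfc_of_continuous_uncurry (F := fun ε t : ℝ => (t + ε) ^ (1 - α))
      ((continuous_snd.add continuous_fst).rpow_const fun _ => Or.inr (sub_nonneg.mpr hα1))
      (A * adjoint A) 0
    simp only [add_zero] at hcfc
    have hre : Continuous fun B : H →L[ℂ] H => (inner ℂ (B y) y : ℂ).re := by fun_prop
    exact ((hre.tendsto _).comp hcfc).mono_left nhdsWithin_le_nhds
  exact ge_of_tendsto (hlim.const_mul _) (eventually_nhdsWithin_of_forall fun ε hε =>
    norm_inner_sq_le_cfc_rpow_add A x y hα0 hα1 hε)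
end

section
/- Let A and B be bounded linear operators on a complex Hilbert space H and let r ≥ 1 be a real number. Then w(B*A)^{2r} ≤ (1/2) w( |A|^{2r} + i|B|^{2r} )². -/
open ContinuousLinearMap Complex

variable {H : Type*} [NormedAddCommGroup H] [InnerProductSpace ℂ H] [CompleteSpace H]

/-!
Fix a unit vector `x`. Then `|⟪B* A x, x⟫| = |⟪A x, B x⟫| ≤ ‖A x‖ ‖B x‖` and
`‖A x‖² = ⟪|A|² x, x⟫`. McCarthy's inequality `⟪T x, x⟫ ^ r ≤ ⟪T ^ r x, x⟫` for `T ≥ 0`, `r ≥ 1`,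
applied to `T = |A|²`, gives `‖A x‖ ^ (2r) ≤ a := ⟪|A| ^ (2r) x, x⟫`, and likewise
`‖B x‖ ^ (2r) ≤ b`. Since `a` and `-b` are the real and imaginary parts of
`⟪(|A| ^ (2r) + i |B| ^ (2r)) x, x⟫`, we get `|⟪B* A x, x⟫| ^ (2r) ≤ a b ≤ (a² + b²) / 2`,
which is half the squared modulus of that number.
-/

open scoped InnerProductSpace

lemma adjoint_mul_self_nonneg (A : H →L[ℂ] H) : 0 ≤ adjoint A * A := by
  simpa only [star_eq_adjoint] using star_mul_self_nonneg A

lemma Real.rpow_add_mul_sub_le_rpow {u s r : ℝ} (hu : 0 ≤ u) (hs : 0 ≤ s) (hr : 1 ≤ r) :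
    s ^ r + r * s ^ (r - 1) * (u - s) ≤ u ^ r := by
  rcases hs.eq_or_lt with rfl | hs
  · rcases hr.eq_or_lt with rfl | hr
    · simp
    · simpa [Real.zero_rpow (by linarith : r ≠ 0), Real.zero_rpow (by linarith : r - 1 ≠ 0)]
        using Real.rpow_nonneg hu r
  · have bernoulli := one_add_mul_self_le_rpow_one_add
      (by linarith [div_nonneg hu hs.le] : -1 ≤ u / s - 1) hr
    rw [add_sub_cancel, Real.div_rpow hu hs.le] at bernoulli
    have hsr : 0 < s ^ r := Real.rpow_pos_of_pos hs r
    calc s ^ r + r * s ^ (r - 1) * (u - s) = s ^ r * (1 + r * (u / s - 1)) := by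
          rw [Real.rpow_sub_one hs.ne']; field_simp
      _ ≤ s ^ r * (u ^ r / s ^ r) := by gcongr
      _ = u ^ r := by field_simp

lemma opow_oabs_two_mul (A : H →L[ℂ] H) {r : ℝ} (hr : 0 ≤ r) :
    opow (oabs A) (2 * r) = opow (adjoint A * A) r := by
  have hAA := adjoint_mul_self_nonneg A
  unfold opow oabs
  rw [← cfc_comp (fun t : ℝ => t ^ (2 * r)) Real.sqrt (adjoint A * A)
    (hg := (Real.continuous_rpow_const (by positivity)).continuousOn)]
  refine cfc_congr fun t ht => ?_
  simp only [Function.comp_apply, Real.sqrt_eq_rpow,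
    ← Real.rpow_mul (spectrum_nonneg_of_nonneg hAA ht)]
  ring_nf

lemma re_inner_rpow_le_re_inner_opow {T : H →L[ℂ] H} (hT : 0 ≤ T) {r : ℝ} (hr : 1 ≤ r)
    {x : H} (hx : ‖x‖ = 1) : (⟪T x, x⟫_ℂ).re ^ r ≤ (⟪opow T r x, x⟫_ℂ).re := by
  set s := (⟪T x, x⟫_ℂ).re
  have hs : 0 ≤ s := ((nonneg_iff_isPositive T).mp hT).re_inner_nonneg_left x
  -- the tangent line of `t ↦ t ^ r` at `s` lies below it on the spectrum of `T`
  have tangent : algebraMap ℝ _ (s ^ r - r * s ^ (r - 1) * s) + (r * s ^ (r - 1)) • T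
      ≤ opow T r := by
    rw [← cfc_const_mul_id _ T, ← cfc_const_add _ _ T]
    exact cfc_mono (hg := (Real.continuous_rpow_const (by linarith)).continuousOn)
      fun t ht => by
        linarith [Real.rpow_add_mul_sub_le_rpow (spectrum_nonneg_of_nonneg hT ht) hs hr]
  have hmono := ((nonneg_iff_isPositive _).mp (sub_nonneg.mpr tangent)).re_inner_nonneg_left x
  have hlin : ∀ c d : ℝ, (⟪(algebraMap ℝ _ c + d • T) x, x⟫_ℂ).re = c + d * s := by
    intro c d
    simp [Algebra.algebraMap_eq_smul_one, ← Complex.coe_smul, hx, s, mul_comm]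
  rw [sub_apply, inner_sub_left, map_sub, RCLike.re_to_complex, RCLike.re_to_complex,
    hlin] at hmono
  linarith

lemma norm_sq_inner_add_I_smul_apply {P Q : H →L[ℂ] H} (hP : IsSelfAdjoint P)
    (hQ : IsSelfAdjoint Q) (x : H) :
    ‖⟪(P + I • Q) x, x⟫_ℂ‖ ^ 2 = (⟪P x, x⟫_ℂ).re ^ 2 + (⟪Q x, x⟫_ℂ).re ^ 2 := by
  have hPx : ((⟪P x, x⟫_ℂ).re : ℂ) = ⟪P x, x⟫_ℂ := hP.isSymmetric.coe_re_inner_apply_self x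
  have hQx : ((⟪Q x, x⟫_ℂ).re : ℂ) = ⟪Q x, x⟫_ℂ := hQ.isSymmetric.coe_re_inner_apply_self x
  rw [add_apply, smul_apply, inner_add_left, inner_smul_left, ← hPx, ← hQx, Complex.sq_norm,
    Complex.normSq_apply]
  simp only [conj_I, neg_mul, add_re, ofReal_re, neg_re, mul_re, I_re, zero_mul, I_im, ofReal_im,
    mul_zero, sub_self, neg_zero, add_zero, add_im, neg_im, mul_im, one_mul, zero_add, mul_neg,
    neg_neg]
  ring

lemma rpow_norm_apply_le_re_inner_opow_oabs (A : H →L[ℂ] H) {r : ℝ} (hr : 1 ≤ r) {x : H}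
    (hx : ‖x‖ = 1) : ‖A x‖ ^ (2 * r) ≤ (⟪opow (oabs A) (2 * r) x, x⟫_ℂ).re := by
  have hnorm : (⟪(adjoint A * A) x, x⟫_ℂ).re = ‖A x‖ ^ 2 := by
    rw [mul_apply_eq_comp, adjoint_inner_left]
    exact inner_self_eq_norm_sq (𝕜 := ℂ) (A x)
  rw [opow_oabs_two_mul A (by linarith), Real.rpow_mul (norm_nonneg _), Real.rpow_two, ← hnorm]
  exact re_inner_rpow_le_re_inner_opow (adjoint_mul_self_nonneg A) hr hx

omit [CompleteSpace H] in
lemma norm_inner_apply_le_nrad (Z : H →L[ℂ] H) {x : H} (hx : ‖x‖ = 1) :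
    ‖⟪Z x, x⟫_ℂ‖ ≤ nrad Z := by
  refine le_ciSup (f := fun y : {y : H // ‖y‖ = 1} => ‖⟪Z y, y⟫_ℂ‖) ⟨‖Z‖, ?_⟩ ⟨x, hx⟩
  rintro _ ⟨⟨y, hy⟩, rfl⟩
  calc ‖⟪Z y, y⟫_ℂ‖ ≤ ‖Z y‖ * ‖y‖ := norm_inner_le_norm _ _
    _ ≤ ‖Z‖ := by rw [hy, mul_one]; exact Z.unit_le_opNorm y hy.le

omit [CompleteSpace H] in
lemma nrad_rpow_le {Z : H →L[ℂ] H} {p M : ℝ} (hp : 0 < p) (hM : 0 ≤ M)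
    (h : ∀ x : H, ‖x‖ = 1 → ‖⟪Z x, x⟫_ℂ‖ ^ p ≤ M) : nrad Z ^ p ≤ M := by
  have hle : nrad Z ≤ M ^ p⁻¹ := Real.iSup_le (fun x =>
    (Real.le_rpow_inv_iff_of_pos (norm_nonneg _) hM hp).mpr (h x x.2)) (by positivity)
  exact (Real.le_rpow_inv_iff_of_pos (Real.iSup_nonneg fun _ => norm_nonneg _) hM hp).mp hle

theorem stmt11 (A B : H →L[ℂ] H) (r : ℝ) (hr : 1 ≤ r) :
    (nrad (adjoint B * A)) ^ (2 * r)
      ≤ (1/2) * (nrad (opow (oabs A) (2 * r) + Complex.I • opow (oabs B) (2 * r))) ^ 2 := by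
  set Z := opow (oabs A) (2 * r) + I • opow (oabs B) (2 * r)
  refine nrad_rpow_le (by positivity) (by positivity) fun x hx => ?_
  set a := (⟪opow (oabs A) (2 * r) x, x⟫_ℂ).re
  set b := (⟪opow (oabs B) (2 * r) x, x⟫_ℂ).re
  have ha : ‖A x‖ ^ (2 * r) ≤ a := rpow_norm_apply_le_re_inner_opow_oabs A hr hx
  have hb : ‖B x‖ ^ (2 * r) ≤ b := rpow_norm_apply_le_re_inner_opow_oabs B hr hx
  have hZ : ‖⟪Z x, x⟫_ℂ‖ ^ 2 = a ^ 2 + b ^ 2 :=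
    norm_sq_inner_add_I_smul_apply (cfc_predicate _ _) (cfc_predicate _ _) x
  calc ‖⟪(adjoint B * A) x, x⟫_ℂ‖ ^ (2 * r) ≤ (‖A x‖ * ‖B x‖) ^ (2 * r) := by
        rw [mul_apply_eq_comp, adjoint_inner_left]
        gcongr
        exact norm_inner_le_norm _ _
    _ = ‖A x‖ ^ (2 * r) * ‖B x‖ ^ (2 * r) := Real.mul_rpow (norm_nonneg _) (norm_nonneg _)
    _ ≤ a * b :=
        mul_le_mul ha hb (by positivity) ((Real.rpow_nonneg (norm_nonneg _) _).trans ha)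
    _ ≤ (1 / 2) * (a ^ 2 + b ^ 2) := by nlinarith [sq_nonneg (a - b)]
    _ ≤ (1 / 2) * nrad Z ^ 2 := by
        rw [← hZ]
        gcongr
        exact norm_inner_apply_le_nrad Z hx
end

section
/- Let T be a positive bounded linear operator on a complex Hilbert space H, let x ∈ H with ‖x‖ = 1, and let r ≥ 1. Then ⟨Tx, x⟩^r ≤ ⟨T^r x, x⟩. -/
open ContinuousLinearMap Complex

variable {H : Type*} [NormedAddCommGroup H] [InnerProductSpace ℂ H] [CompleteSpace H]

/-!
The map `t ↦ t ^ r` is convex on `[0, ∞)`, so it lies above its tangent line at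
`a = ⟪T x, x⟫`. That affine minorant survives the functional calculus, and the compression
`A ↦ ⟪A x, x⟫` to a unit vector turns an affine function of `T` into the same affine function
of `a`; at `t = a` the tangent line takes the value `a ^ r`.
-/

lemma Real.rpow_add_mul_rpow_sub_one_mul_sub_le_rpow {a t r : ℝ} (ha : 0 ≤ a) (ht : 0 ≤ t)
    (hr : 1 ≤ r) : a ^ r + r * a ^ (r - 1) * (t - a) ≤ t ^ r := by
  rcases ha.eq_or_lt with rfl | ha
  · rcases hr.eq_or_lt with rfl | hr
    · simp
    · rw [Real.zero_rpow (by positivity), Real.zero_rpow (by linarith)]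
      simpa using Real.rpow_nonneg ht r
  · -- Bernoulli's inequality for `(1 + (t / a - 1)) ^ r`, scaled by `a ^ r`.
    have bernoulli := one_add_mul_self_le_rpow_one_add (s := t / a - 1) (by
      have := div_nonneg ht ha.le; linarith) hr
    calc a ^ r + r * a ^ (r - 1) * (t - a) = a ^ r * (1 + r * (t / a - 1)) := by
          rw [Real.rpow_sub_one ha.ne']; field_simp
      _ ≤ a ^ r * (1 + (t / a - 1)) ^ r := by gcongr
      _ = t ^ r := by
          rw [add_sub_cancel, ← Real.mul_rpow ha.le (div_nonneg ht ha.le),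
            mul_div_cancel₀ _ ha.ne']

lemma ContinuousLinearMap.re_inner_algebraMap_add_smul_apply {E : Type*} [NormedAddCommGroup E]
    [InnerProductSpace ℂ E] (c d : ℝ) (T : E →L[ℂ] E) (x : E) :
    (inner ℂ ((algebraMap ℝ (E →L[ℂ] E) c + d • T) x) x : ℂ).re
      = c * ‖x‖ ^ 2 + d * (inner ℂ (T x) x : ℂ).re := by
  simp only [Algebra.algebraMap_eq_smul_one, add_apply, smul_apply, inner_add_left,
    ← Complex.coe_smul, inner_smul_left]
  simp [← ofReal_pow]

lemma IsSelfAdjoint.add_mul_re_inner_le_re_inner_cfc {T : H →L[ℂ] H} (hT : IsSelfAdjoint T)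
    {f : ℝ → ℝ} (hf : ContinuousOn f (spectrum ℝ T)) {c d : ℝ}
    (hcd : ∀ t ∈ spectrum ℝ T, c + d * t ≤ f t) (x : H) :
    c * ‖x‖ ^ 2 + d * (inner ℂ (T x) x : ℂ).re ≤ (inner ℂ (cfc f T x) x : ℂ).re := by
  have haffine : cfc (fun t : ℝ => c + d * t) T = algebraMap ℝ (H →L[ℂ] H) c + d • T := by
    rw [cfc_add .., cfc_const c T, cfc_const_mul .., cfc_id' ℝ T]
  have hle : algebraMap ℝ (H →L[ℂ] H) c + d • T ≤ cfc f T :=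
    haffine ▸ cfc_mono hcd (by fun_prop) hf
  have hpos := ((le_def _ _).mp hle).re_inner_nonneg_left x
  rw [sub_apply, inner_sub_left, map_sub, RCLike.re_to_complex, RCLike.re_to_complex,
    re_inner_algebraMap_add_smul_apply] at hpos
  linarith

theorem stmt12 (T : H →L[ℂ] H) (hT : T.IsPositive) (x : H) (hx : ‖x‖ = 1)
    (r : ℝ) (hr : 1 ≤ r) :
    (inner ℂ (T x) x : ℂ).re ^ r ≤ (inner ℂ (opow T r x) x : ℂ).re := by
  set a := (inner ℂ (T x) x : ℂ).re
  have ha : 0 ≤ a := hT.re_inner_nonneg_left x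
  have hspec : ∀ t ∈ spectrum ℝ T, 0 ≤ t :=
    fun t ht => spectrum_nonneg_of_nonneg ((nonneg_iff_isPositive T).mpr hT) ht
  have htangent : ∀ t ∈ spectrum ℝ T,
      (a ^ r - r * a ^ (r - 1) * a) + r * a ^ (r - 1) * t ≤ t ^ r := fun t ht => by
    linarith [Real.rpow_add_mul_rpow_sub_one_mul_sub_le_rpow ha (hspec t ht) hr]
  have hquad := hT.isSelfAdjoint.add_mul_re_inner_le_re_inner_cfc
    (Real.continuous_rpow_const (by linarith)).continuousOn htangent x
  rw [hx] at hquad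
  unfold opow
  linarith
end

section
/- Let A, X, Y be bounded linear operators on a complex Hilbert space H with ‖X‖ ≤ 1 and ‖Y‖ ≤ 1. Then w(AX + YA) ≤ √2 · ‖AA* + A*A‖^{1/2}, and likewise w(AX − YA) ≤ √2 · ‖AA* + A*A‖^{1/2}. -/
open ContinuousLinearMap Complex

variable {H : Type*} [NormedAddCommGroup H] [InnerProductSpace ℂ H] [CompleteSpace H]

/-!
Move the contraction out of each term: `⟨AXx, x⟩ = ⟨Xx, A*x⟩` and `⟨YAx, x⟩ = ⟨Ax, Y*x⟩`, so
for a unit vector `x`, `|⟨(AX ± YA)x, x⟩| ≤ ‖A*x‖ + ‖Ax‖`. By the quadratic-mean inequality this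
is at most `√2 (‖A*x‖² + ‖Ax‖²)^{1/2} = √2 ⟨(AA* + A*A)x, x⟩^{1/2} ≤ √2 ‖AA* + A*A‖^{1/2}`.
-/

theorem add_le_sqrt_two_mul_sqrt_sq_add_sq (a b : ℝ) : a + b ≤ √2 * √(a ^ 2 + b ^ 2) := by
  rw [← Real.sqrt_mul zero_le_two]
  exact Real.le_sqrt_of_sq_le add_sq_le

namespace ContinuousLinearMap

variable {𝕜 E : Type*} [RCLike 𝕜] [NormedAddCommGroup E] [InnerProductSpace 𝕜 E] [CompleteSpace E]

theorem norm_inner_mul_apply_self_le_of_norm_right_le_one (A : E →L[𝕜] E) {X : E →L[𝕜] E}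
    (hX : ‖X‖ ≤ 1) (x : E) : ‖inner 𝕜 ((A * X) x) x‖ ≤ ‖x‖ * ‖adjoint A x‖ := by
  rw [mul_apply_eq_comp, ← adjoint_inner_right]
  calc ‖inner 𝕜 (X x) (adjoint A x)‖ ≤ ‖X x‖ * ‖adjoint A x‖ := norm_inner_le_norm _ _
    _ ≤ ‖x‖ * ‖adjoint A x‖ := by
      gcongr
      simpa using X.le_of_opNorm_le hX x

theorem norm_inner_mul_apply_self_le_of_norm_left_le_one (A : E →L[𝕜] E) {Y : E →L[𝕜] E}
    (hY : ‖Y‖ ≤ 1) (x : E) : ‖inner 𝕜 ((Y * A) x) x‖ ≤ ‖A x‖ * ‖x‖ := by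
  rw [mul_apply_eq_comp, ← adjoint_inner_right]
  calc ‖inner 𝕜 (A x) (adjoint Y x)‖ ≤ ‖A x‖ * ‖adjoint Y x‖ := norm_inner_le_norm _ _
    _ ≤ ‖A x‖ * ‖x‖ := by
      gcongr
      have hY' : ‖adjoint Y‖ ≤ 1 := by rwa [LinearIsometryEquiv.norm_map]
      simpa using (adjoint Y).le_of_opNorm_le hY' x

theorem sq_norm_adjoint_apply_add_sq_norm_apply_le (A : E →L[𝕜] E) (x : E) :
    ‖adjoint A x‖ ^ 2 + ‖A x‖ ^ 2 ≤ ‖A * adjoint A + adjoint A * A‖ * ‖x‖ ^ 2 := by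
  set S := A * adjoint A + adjoint A * A
  have hS : ‖adjoint A x‖ ^ 2 + ‖A x‖ ^ 2 = RCLike.re (inner 𝕜 x (S x)) := by
    rw [apply_norm_sq_eq_inner_adjoint_right, apply_norm_sq_eq_inner_adjoint_right, adjoint_adjoint,
      ← map_add, ← inner_add_right]
    rfl
  calc ‖adjoint A x‖ ^ 2 + ‖A x‖ ^ 2 = RCLike.re (inner 𝕜 x (S x)) := hS
    _ ≤ ‖x‖ * ‖S x‖ := re_inner_le_norm _ _
    _ ≤ ‖x‖ * (‖S‖ * ‖x‖) := by gcongr; exact S.le_opNorm x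
    _ = ‖S‖ * ‖x‖ ^ 2 := by ring

theorem norm_adjoint_apply_add_norm_apply_le (A : E →L[𝕜] E) {x : E} (hx : ‖x‖ ≤ 1) :
    ‖adjoint A x‖ + ‖A x‖ ≤ √2 * √‖A * adjoint A + adjoint A * A‖ := by
  refine (add_le_sqrt_two_mul_sqrt_sq_add_sq _ _).trans ?_
  gcongr
  calc ‖adjoint A x‖ ^ 2 + ‖A x‖ ^ 2 ≤ ‖A * adjoint A + adjoint A * A‖ * ‖x‖ ^ 2 :=
        sq_norm_adjoint_apply_add_sq_norm_apply_le A x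
    _ ≤ ‖A * adjoint A + adjoint A * A‖ := by
      apply mul_le_of_le_one_right (norm_nonneg _)
      exact pow_le_one₀ (norm_nonneg x) hx

end ContinuousLinearMap

theorem stmt14 (A X Y : H →L[ℂ] H) (hX : ‖X‖ ≤ 1) (hY : ‖Y‖ ≤ 1) :
    nrad (A * X + Y * A) ≤ Real.sqrt 2 * Real.sqrt ‖A * adjoint A + adjoint A * A‖
      ∧ nrad (A * X - Y * A) ≤ Real.sqrt 2 * Real.sqrt ‖A * adjoint A + adjoint A * A‖ := by
  have hsum (x : H) (hx : ‖x‖ = 1) :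
      ‖inner ℂ ((A * X) x) x‖ + ‖inner ℂ ((Y * A) x) x‖
        ≤ √2 * √‖A * adjoint A + adjoint A * A‖ := by
    calc ‖inner ℂ ((A * X) x) x‖ + ‖inner ℂ ((Y * A) x) x‖ ≤ ‖adjoint A x‖ + ‖A x‖ := by
          have hAX := A.norm_inner_mul_apply_self_le_of_norm_right_le_one hX x
          have hYA := A.norm_inner_mul_apply_self_le_of_norm_left_le_one hY x
          rw [hx] at hAX hYA
          linarith
      _ ≤ √2 * √‖A * adjoint A + adjoint A * A‖ := A.norm_adjoint_apply_add_norm_apply_le hx.le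
  constructor <;> refine Real.iSup_le (fun ⟨x, hx⟩ => ?_) (by positivity)
  · rw [add_apply, inner_add_left]
    exact (norm_add_le _ _).trans (hsum x hx)
  · rw [sub_apply, inner_sub_left]
    exact (norm_sub_le _ _).trans (hsum x hx)
end

section
/- Let A and B be bounded linear operators on a complex Hilbert space H. Then w(|A|² + i|B|²)² ≤ ‖ |A|⁴ + |B|⁴ ‖, i.e., for positive operators P = |A|² and Q = |B|², w(P + iQ)² ≤ ‖P² + Q²‖. -/
open ContinuousLinearMap Complex

variable {H : Type*} [NormedAddCommGroup H] [InnerProductSpace ℂ H] [CompleteSpace H]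

/-!
Write `T = P + iQ` with `P`, `Q` self-adjoint. For a unit vector `x`, the numbers `⟪Px, x⟫` and
`⟪Qx, x⟫` are real and are the real and imaginary parts of `⟪Tx, x⟫` up to sign, so
`|⟪Tx, x⟫|² = ⟪Px, x⟫² + ⟪Qx, x⟫² ≤ ‖Px‖² + ‖Qx‖² = ⟪(P² + Q²)x, x⟫ ≤ ‖P² + Q²‖`
by Cauchy–Schwarz.
-/

omit [CompleteSpace H] in
lemma nrad_sq_le_of_norm_inner_sq_le {T : H →L[ℂ] H} {M : ℝ} (hM : 0 ≤ M)
    (h : ∀ x : H, ‖x‖ = 1 → ‖inner ℂ (T x) x‖ ^ 2 ≤ M) : nrad T ^ 2 ≤ M := by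
  have hle : nrad T ≤ √M :=
    Real.iSup_le (fun x => (Real.le_sqrt (norm_nonneg _) hM).mpr (h x x.2)) (Real.sqrt_nonneg M)
  exact (Real.le_sqrt (Real.iSup_nonneg fun _ => norm_nonneg _) hM).mp hle

section UnitVector

variable {𝕜 E : Type*} [RCLike 𝕜] [SeminormedAddCommGroup E] [InnerProductSpace 𝕜 E]
  (T : E →L[𝕜] E) {x : E}

lemma norm_inner_apply_self_le_norm_apply (hx : ‖x‖ = 1) : ‖inner 𝕜 (T x) x‖ ≤ ‖T x‖ := by
  simpa [hx] using norm_inner_le_norm (𝕜 := 𝕜) (T x) x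

lemma sq_re_inner_apply_self_le (hx : ‖x‖ = 1) :
    RCLike.re (inner 𝕜 (T x) x) ^ 2 ≤ ‖T x‖ ^ 2 := by
  have h := (RCLike.abs_re_le_norm _).trans (norm_inner_apply_self_le_norm_apply T hx)
  exact sq_le_sq' (abs_le.mp h).1 (abs_le.mp h).2

lemma re_inner_apply_self_le_opNorm (hx : ‖x‖ = 1) : RCLike.re (inner 𝕜 (T x) x) ≤ ‖T‖ :=
  calc RCLike.re (inner 𝕜 (T x) x) ≤ ‖inner 𝕜 (T x) x‖ := RCLike.re_le_norm _
    _ ≤ ‖T x‖ := norm_inner_apply_self_le_norm_apply T hx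
    _ ≤ ‖T‖ := T.unit_le_opNorm x hx.le

end UnitVector

namespace IsSelfAdjoint

variable {P Q : H →L[ℂ] H}

lemma re_inner_sq_apply_self (hP : IsSelfAdjoint P) (x : H) :
    RCLike.re (inner ℂ ((P ^ 2) x) x) = ‖P x‖ ^ 2 := by
  rw [pow_two, mul_apply_eq_comp, ← adjoint_inner_right, hP.adjoint_eq, inner_self_eq_norm_sq]

lemma norm_inner_add_I_smul_apply_self_sq (hP : IsSelfAdjoint P) (hQ : IsSelfAdjoint Q) (x : H) :
    ‖inner ℂ ((P + I • Q) x) x‖ ^ 2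
      = RCLike.re (inner ℂ (P x) x) ^ 2 + RCLike.re (inner ℂ (Q x) x) ^ 2 := by
  have hPx : ((RCLike.re (inner ℂ (P x) x) : ℝ) : ℂ) = inner ℂ (P x) x :=
    hP.isSymmetric.coe_re_inner_apply_self x
  have hQx : ((RCLike.re (inner ℂ (Q x) x) : ℝ) : ℂ) = inner ℂ (Q x) x :=
    hQ.isSymmetric.coe_re_inner_apply_self x
  rw [add_apply, smul_apply, inner_add_left, inner_smul_left, ← hPx, ← hQx,
    Complex.sq_norm, Complex.normSq_apply]
  simp [sq]

lemma nrad_add_I_smul_sq_le (hP : IsSelfAdjoint P) (hQ : IsSelfAdjoint Q) :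
    nrad (P + I • Q) ^ 2 ≤ ‖P ^ 2 + Q ^ 2‖ := by
  refine nrad_sq_le_of_norm_inner_sq_le (norm_nonneg _) fun x hx => ?_
  calc ‖inner ℂ ((P + I • Q) x) x‖ ^ 2
      = RCLike.re (inner ℂ (P x) x) ^ 2 + RCLike.re (inner ℂ (Q x) x) ^ 2 :=
        norm_inner_add_I_smul_apply_self_sq hP hQ x
    _ ≤ ‖P x‖ ^ 2 + ‖Q x‖ ^ 2 :=
        add_le_add (sq_re_inner_apply_self_le P hx) (sq_re_inner_apply_self_le Q hx)
    _ = RCLike.re (inner ℂ ((P ^ 2 + Q ^ 2) x) x) := by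
        rw [add_apply, inner_add_left, map_add, hP.re_inner_sq_apply_self,
          hQ.re_inner_sq_apply_self]
    _ ≤ ‖P ^ 2 + Q ^ 2‖ := re_inner_apply_self_le_opNorm _ hx

end IsSelfAdjoint

theorem stmt19 (A B : H →L[ℂ] H) :
    (nrad (adjoint A * A + Complex.I • (adjoint B * B))) ^ 2
      ≤ ‖(adjoint A * A) ^ 2 + (adjoint B * B) ^ 2‖ :=
  (IsSelfAdjoint.star_mul_self A).nrad_add_I_smul_sq_le (IsSelfAdjoint.star_mul_self B)
end
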